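/- Suppose A ∈ ℝ^{n×n} is invertible with μ[A] < 0, f is Lipschitz with constant K in its second argument, and K|A||A^{−1}| < −μ[A]. Then there exists h* > 0 such that for all h ∈ (0, h*), the one-step contraction factor L(h) = e^{μ[A]h} + K|A^{−1}||A| h e^{h|A|} of the exponential Euler map satisfies L(h) < 1; in particular h* can be taken as the positive solution of 1 + hK|A^{−1}||A| e^{h|A| − hμ[A]} = e^{−hμ[A]}. -/

import Mathlib

/-!
Write `μ = μ[A]`, `a = |A|` and `c = K|A⁻¹||A|`; then `c > 0` because `|A||A⁻¹| ≥ |A A⁻¹| = 1`,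
and `c < -μ`. The contraction factor `F h = e^{μh} + c h e^{ha}` is strictly convex on `[0, ∞)`
(a strictly convex exponential plus a product of nonnegative, increasing, convex functions) and
`F 0 = 1`. Because `c < -μ`, `F` drops below `1` at some `ε > 0`, while `F (1/c) > 1`; the
intermediate value theorem gives `h* > 0` with `F h* = 1`, and strict convexity forces `F < 1` on
`(0, h*)`. Multiplying `F h* = 1` by `e^{-μh*}` gives the equation defining `h*`.
-/

/-- Operator norm of a real matrix induced by the Euclidean vector norm. -/
noncomputable def euclideanOpNorm {n : ℕ} (B : Matrix (Fin n) (Fin n) ℝ) : ℝ :=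
  ‖Matrix.toEuclideanCLM (𝕜 := ℝ) B‖

/-- Logarithmic matrix norm `μ[B] = λ_max((B + Bᵀ)/2)`. -/
noncomputable def logMatrixNorm {n : ℕ} (B : Matrix (Fin n) (Fin n) ℝ) : ℝ :=
  ⨆ i, (Matrix.isHermitian_add_transpose_self B).eigenvalues i / 2

open Real Set

lemma strictConvexOn_exp_mul {μ : ℝ} (hμ : μ ≠ 0) :
    StrictConvexOn ℝ univ fun x ↦ exp (μ * x) := by
  refine ⟨convex_univ, fun x _ y _ hxy s t hs ht hst ↦ ?_⟩
  have := strictConvexOn_exp.2 (mem_univ (μ * x)) (mem_univ (μ * y))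
    (by simpa [hμ] using hxy) hs ht hst
  simpa only [smul_eq_mul, mul_add, mul_left_comm μ] using this

lemma convexOn_mul_exp_mul {a : ℝ} (ha : 0 ≤ a) :
    ConvexOn ℝ (Ici 0) fun x ↦ x * exp (x * a) := by
  have hexp : ConvexOn ℝ (Ici 0) fun x ↦ exp (x * a) := by
    have := convexOn_exp.comp_linearMap (LinearMap.mul ℝ ℝ a)
    simpa only [Function.comp_def, LinearMap.mul_apply', mul_comm a]
      using this.subset (subset_univ _) (convex_Ici 0)
  exact (convexOn_id (convex_Ici 0)).mul hexp (fun x hx ↦ hx) (fun x _ ↦ (exp_pos _).le)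
    (monotoneOn_id.monovaryOn fun x _ y _ hxy ↦ exp_le_exp.2 (by nlinarith))

lemma strictConvexOn_exp_mul_add_mul_mul_exp {μ c a : ℝ} (hμ : μ ≠ 0) (hc : 0 ≤ c)
    (ha : 0 ≤ a) : StrictConvexOn ℝ (Ici 0) fun h ↦ exp (μ * h) + c * h * exp (h * a) := by
  have hsum : (fun h ↦ exp (μ * h) + c * h * exp (h * a)) =
      (fun h ↦ exp (μ * h)) + c • fun h ↦ h * exp (h * a) := by
    ext h
    simp only [Pi.add_apply, Pi.smul_apply, smul_eq_mul, mul_assoc]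
  rw [hsum]
  exact ((strictConvexOn_exp_mul hμ).subset (subset_univ _) (convex_Ici 0)).add_convexOn
    ((convexOn_mul_exp_mul ha).smul hc)

lemma exists_pos_exp_mul_add_mul_mul_exp_lt_one {μ c a : ℝ} (hc : 0 < c) (hcμ : c < -μ)
    (ha : 0 ≤ a) : ∃ ε > 0, exp (μ * ε) + c * ε * exp (ε * a) < 1 := by
  have hμc : 1 < -μ / c := (one_lt_div hc).2 hcμ
  -- `ε` is chosen so that `e^{ε(a - μ)} = -μ / c`, which turns `F ε < 1` into
  -- `1 - με < e^{-με}`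
  set ε := log (-μ / c) / (a - μ)
  have hε : 0 < ε := div_pos (log_pos hμc) (by linarith)
  have hcexp : c * exp (ε * a) = -μ * exp (μ * ε) := by
    have : exp (ε * (a - μ)) = -μ / c := by
      rw [div_mul_cancel₀ _ (by linarith), exp_log (by linarith)]
    rw [show ε * a = ε * (a - μ) + μ * ε by ring, exp_add, this]
    field_simp
  refine ⟨ε, hε, ?_⟩
  calc exp (μ * ε) + c * ε * exp (ε * a) = exp (μ * ε) * (-(μ * ε) + 1) := by
        rw [mul_right_comm, hcexp]; ring
    _ < exp (μ * ε) * exp (-(μ * ε)) := by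
        have hμε : μ * ε < 0 := mul_neg_of_neg_of_pos (by linarith) hε
        exact mul_lt_mul_of_pos_left (add_one_lt_exp (neg_ne_zero.2 hμε.ne)) (exp_pos _)
    _ = 1 := by rw [← exp_add, add_neg_cancel, exp_zero]

lemma exists_pos_exp_mul_add_mul_mul_exp_eq_one {μ c a : ℝ} (hc : 0 < c) (hcμ : c < -μ)
    (ha : 0 ≤ a) : ∃ hs > 0, exp (μ * hs) + c * hs * exp (hs * a) = 1 ∧
      ∀ h ∈ Ioo 0 hs, exp (μ * h) + c * h * exp (h * a) < 1 := by
  set F : ℝ → ℝ := fun h ↦ exp (μ * h) + c * h * exp (h * a)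
  obtain ⟨ε, hε, hFε⟩ := exists_pos_exp_mul_add_mul_mul_exp_lt_one hc hcμ ha
  have hF : 1 < F c⁻¹ := by
    have : 1 ≤ exp (c⁻¹ * a) := one_le_exp (by positivity)
    simp only [F, mul_inv_cancel₀ hc.ne', one_mul]
    linarith [exp_pos (μ * c⁻¹)]
  obtain ⟨hs, hs_mem, hFhs⟩ : ∃ hs ∈ uIcc ε c⁻¹, F hs = 1 :=
    intermediate_value_uIcc (by fun_prop) (mem_uIcc_of_le hFε.le hF.le)
  have hs0 : 0 < hs := (lt_min hε (inv_pos.2 hc)).trans_le hs_mem.1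
  refine ⟨hs, hs0, hFhs, fun h hh ↦ ?_⟩
  have hconv : StrictConvexOn ℝ (Ici 0) F :=
    strictConvexOn_exp_mul_add_mul_mul_exp (by linarith : μ < 0).ne hc.le ha
  have hF0 : F 0 = 1 := by simp [F]
  have := hconv.lt_on_openSegment (mem_Ici.2 le_rfl) (mem_Ici.2 hs0.le) hs0.ne
    (by rwa [openSegment_eq_Ioo hs0])
  rwa [hF0, hFhs, max_self] at this

lemma one_add_mul_mul_exp_sub_eq_exp_neg {μ c a h : ℝ}
    (hF : exp (μ * h) + c * h * exp (h * a) = 1) :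
    1 + h * c * exp (h * a - h * μ) = exp (-h * μ) := by
  have hinv : exp (-h * μ) * exp (μ * h) = 1 := by
    rw [← exp_add, show -h * μ + μ * h = 0 by ring, exp_zero]
  rw [sub_eq_add_neg, exp_add, ← neg_mul]
  linear_combination exp (-h * μ) * hF - hinv

lemma euclideanOpNorm_nonneg {n : ℕ} (A : Matrix (Fin n) (Fin n) ℝ) : 0 ≤ euclideanOpNorm A :=
  norm_nonneg _

lemma one_le_euclideanOpNorm_mul_inv {n : ℕ} [Nonempty (Fin n)]
    {A : Matrix (Fin n) (Fin n) ℝ} (hA : IsUnit A.det) :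
    1 ≤ euclideanOpNorm A * euclideanOpNorm A⁻¹ := by
  calc (1 : ℝ) = ‖Matrix.toEuclideanCLM (𝕜 := ℝ) (A * A⁻¹)‖ := by
        rw [Matrix.mul_nonsing_inv A hA, map_one, norm_one]
    _ ≤ euclideanOpNorm A * euclideanOpNorm A⁻¹ := by
        rw [map_mul]; exact norm_mul_le _ _

lemma logMatrixNorm_of_isEmpty {n : ℕ} [IsEmpty (Fin n)] (A : Matrix (Fin n) (Fin n) ℝ) :
    logMatrixNorm A = 0 := by
  rw [logMatrixNorm, iSup_of_empty', Real.sSup_empty]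

theorem exponentialEuler_contraction_general {n : ℕ} (A : Matrix (Fin n) (Fin n) ℝ)
    (hA : IsUnit A.det) (K : ℝ) (hK : 0 < K)
    (hcond : K * euclideanOpNorm A * euclideanOpNorm A⁻¹ < -logMatrixNorm A) :
    ∃ hstar : ℝ, 0 < hstar ∧
      1 + hstar * K * euclideanOpNorm A⁻¹ * euclideanOpNorm A *
          Real.exp (hstar * euclideanOpNorm A - hstar * logMatrixNorm A) =
        Real.exp (-hstar * logMatrixNorm A) ∧
      ∀ h : ℝ, 0 < h → h < hstar →
        Real.exp (logMatrixNorm A * h) +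
            K * euclideanOpNorm A⁻¹ * euclideanOpNorm A * h *
              Real.exp (h * euclideanOpNorm A) < 1 := by
  rcases isEmpty_or_nonempty (Fin n) with _ | _
  · have := mul_nonneg (mul_nonneg hK.le (euclideanOpNorm_nonneg A))
      (euclideanOpNorm_nonneg A⁻¹)
    rw [logMatrixNorm_of_isEmpty] at hcond
    linarith
  have hc : 0 < K * euclideanOpNorm A⁻¹ * euclideanOpNorm A := by
    rw [mul_assoc, mul_comm (euclideanOpNorm _)]
    exact mul_pos hK (one_pos.trans_le (one_le_euclideanOpNorm_mul_inv hA))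
  obtain ⟨hstar, hstar_pos, hroot, hlt⟩ := exists_pos_exp_mul_add_mul_mul_exp_eq_one hc
    (by rwa [mul_right_comm]) (euclideanOpNorm_nonneg A)
  refine ⟨hstar, hstar_pos, ?_, fun h h0 hh ↦ hlt h ⟨h0, hh⟩⟩
  simpa only [mul_assoc] using one_add_mul_mul_exp_sub_eq_exp_neg hroot

/-- If `μ[A] < 0` and `K|A||A⁻¹| < −μ[A]`, then there exists `h* > 0`,
given by the positive solution of
`1 + hK|A⁻¹||A|e^{h|A| − hμ[A]} = e^{−hμ[A]}`, such that the contraction factor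
`L(h) = e^{μ[A]h} + K|A⁻¹||A| h e^{h|A|}` satisfies `L(h) < 1` for all
`h ∈ (0, h*)`. -/
theorem exponentialEuler_contraction {n : ℕ} (A : Matrix (Fin n) (Fin n) ℝ)
    (hA : IsUnit A.det) (hμ : logMatrixNorm A < 0) (K : ℝ) (hK : 0 < K)
    (hcond : K * euclideanOpNorm A * euclideanOpNorm A⁻¹ < -logMatrixNorm A) :
    ∃ hstar : ℝ, 0 < hstar ∧
      1 + hstar * K * euclideanOpNorm A⁻¹ * euclideanOpNorm A *
          Real.exp (hstar * euclideanOpNorm A - hstar * logMatrixNorm A) =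
        Real.exp (-hstar * logMatrixNorm A) ∧
      ∀ h : ℝ, 0 < h → h < hstar →
        Real.exp (logMatrixNorm A * h) +
            K * euclideanOpNorm A⁻¹ * euclideanOpNorm A * h *
              Real.exp (h * euclideanOpNorm A) < 1 :=
  exponentialEuler_contraction_general A hA K hK hcond
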